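/- arXiv:2210.05707 — 2 statements merged into one kernel-verified Lean document; each statement's English description precedes it below -/
import Mathlib

section
/- If A ∈ ℂ^{K×K} is nonsingular and M ∈ {0,1}^{K×K} has at least one generalized diagonal of ones (i.e., there exists a permutation σ of {1,…,K} with M_{k,σ(k)} = 1 for all k), then there exists a permutation ρ of {1, …, K} such that det((P_ρ A) ⊙ M) ≠ 0. -/
/-!
Weighting the determinants by `sign ρ` and summing over all row permutations `ρ`, the
substitution `τ = ρ * π` in the Leibniz expansion gives
`∑ ρ, sign ρ • det((P_ρ A) ⊙ M) = det A * perm M`.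
A nonnegative matrix with a positive generalized diagonal has positive permanent, so the
right-hand side is nonzero, hence so is some `det((P_ρ A) ⊙ M)`.
-/

noncomputable section

/-- The permutation matrix `P_ρ` with `(P_ρ)_{k,ℓ} = 1` iff `ℓ = ρ(k)`, so that the
`k`-th row of `P_ρ * A` is the `ρ(k)`-th row of `A`. -/
def permMat {K : ℕ} (ρ : Equiv.Perm (Fin K)) : Matrix (Fin K) (Fin K) ℂ :=
  Matrix.of fun k l => if l = ρ k then 1 else 0

open Equiv Equiv.Perm

lemma permMat_mul {K : ℕ} (ρ : Perm (Fin K)) (A : Matrix (Fin K) (Fin K) ℂ) :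
    permMat ρ * A = A.submatrix ρ id := by
  ext k l
  simp [Matrix.mul_apply, permMat]

namespace Matrix

variable {n R : Type*} [Fintype n]

lemma sum_sign_smul_det_submatrix_hadamard [DecidableEq n] [CommRing R] (A M : Matrix n n R) :
    ∑ ρ : Perm n, sign ρ • (A.submatrix ρ id ⊙ M).det = A.det * M.permanent := by
  have reindex (π : Perm n) :
      ∑ ρ : Perm n, sign ρ • sign π • ∏ i, A (ρ (π i)) i * M (π i) i
        = A.det * ∏ i, M (π i) i := by
    simp_rw [smul_smul, ← map_mul, Finset.prod_mul_distrib, ← smul_mul_assoc]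
    rw [← Finset.sum_mul, det_apply]
    exact congrArg (· * _) (Equiv.sum_comp (Equiv.mulRight π) fun τ => sign τ • ∏ i, A (τ i) i)
  simp only [det_apply (_ ⊙ M), hadamard_apply, submatrix_apply, id, Finset.smul_sum]
  rw [Finset.sum_comm, permanent, Finset.mul_sum]
  exact Finset.sum_congr rfl fun π _ => reindex π

lemma permanent_pos [DecidableEq n] [CommSemiring R] [PartialOrder R] [IsStrictOrderedRing R]
    {M : Matrix n n R} (hM : ∀ i j, 0 ≤ M i j) {σ : Perm n} (hσ : ∀ i, 0 < M i (σ i)) :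
    0 < M.permanent := by
  rw [← permanent_transpose]
  exact Finset.sum_pos' (fun τ _ => Finset.prod_nonneg fun i _ => hM _ _)
    ⟨σ, Finset.mem_univ _, Finset.prod_pos fun i _ => hσ i⟩

end Matrix

open Matrix

/-- If `A ∈ ℂ^{K×K}` is nonsingular and the binary matrix
`M ∈ {0,1}^{K×K}` has a generalized diagonal of ones, then there is a permutation `ρ`
with `det((P_ρ A) ⊙ M) ≠ 0`. -/
theorem stmt_3 (K : ℕ) (A M : Matrix (Fin K) (Fin K) ℂ)
    (hA : A.det ≠ 0)
    (hM : ∀ k l, M k l = 0 ∨ M k l = 1)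
    (hdiag : ∃ σ : Equiv.Perm (Fin K), ∀ k, M k (σ k) = 1) :
    ∃ ρ : Equiv.Perm (Fin K), (Matrix.hadamard (permMat ρ * A) M).det ≠ 0 := by
  obtain ⟨σ, hσ⟩ := hdiag
  have hperm : M.permanent ≠ 0 := by
    open scoped ComplexOrder in
    refine (permanent_pos (M := M) (σ := σ) (fun k l => ?_) fun k => by simp [hσ k]).ne'
    rcases hM k l with h | h <;> simp [h]
  obtain ⟨ρ, -, hρ⟩ := Finset.exists_ne_zero_of_sum_ne_zero
    ((sum_sign_smul_det_submatrix_hadamard A M).symm ▸ mul_ne_zero hA hperm)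
  refine ⟨ρ, fun h => hρ ?_⟩
  rw [← permMat_mul, h, smul_zero]
end
end

section
/- Let N ≥ 5 be an integer, and set I_1 = [0, (N−2)/N), I_2 = [(N−2)/N, (N−1)/N), I_3 = [(N−1)/N, 1), Λ_1 = ⋃_{k=0}^{N−3}(Nℤ+k), Λ_2 = Nℤ+(N−2), Λ_3 = Nℤ+(N−1), and S_k = [0,1)∖I_k for k = 1,2,3. Then the system E(S_1,Λ_1) ∪ E(S_2,Λ_2) ∪ E(S_3,Λ_3) is not complete in L²[0,1): there exists a nonzero f ∈ L²[0,1) orthogonal to every function e^{2πiλ(·)}χ_{S_k} with λ ∈ Λ_k, k = 1,2,3. -/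
/-!
Take `ω = e^{2πi/N}` and let `f` be `ω³`, `-(ω + ω²)`, `1` on `[0,1/N)`, `[1/N,2/N)`, `[2/N,3/N)`
and `0` elsewhere. Since `3/N ≤ (N-2)/N`, `f` vanishes on `S_1`, and `[0,3/N) ⊆ S_2, S_3`. For an
integer `n ≠ 0`, with `c = -2πin` and `z = e^{c/N}`,
`∫₀^{3/N} e^{cx} f(x) dx = (z - 1)/c · (ω³ - (ω + ω²) z + z²) = (z - 1)/c · (z - ω)(z - ω²)`,
and `z = ω²` on `Λ_2`, `z = ω` on `Λ_3`.
-/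

open MeasureTheory Complex Real Set
open scoped Classical

noncomputable section

/-- Lebesgue measure restricted to `[0,1)`. -/
def μ01 : MeasureTheory.Measure ℝ := MeasureTheory.volume.restrict (Set.Ico (0:ℝ) 1)

/-- The Hilbert space `L²[0,1)` of complex square-integrable functions on `[0,1)`. -/
abbrev L2 : Type := MeasureTheory.Lp ℂ 2 μ01

/-- A function on ℝ as an element of `L²[0,1)` (junk value `0` if not in `L²`). -/
def toL2 (f : ℝ → ℂ) : L2 :=
  if h : MeasureTheory.MemLp f 2 μ01 then h.toLp f else 0

/-- The function `x ↦ e^{2πiλx} · χ_S(x)` as an element of `L²[0,1)`. -/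
def expChar (S : Set ℝ) (lam : ℝ) : L2 :=
  toL2 (S.indicator fun x => Complex.exp (2 * Real.pi * lam * x * Complex.I))

/-- `L²(S)` viewed as the subset of `L²[0,1)` of elements vanishing a.e. outside `S`. -/
def L2on (S : Set ℝ) : Set L2 := {g : L2 | ∀ᵐ x ∂μ01, x ∉ S → g x = 0}

/-- A family is a Riesz sequence: there are `0 < A ≤ B` giving a two-sided ℓ²-norm
equivalence on (finite) linear combinations. -/
def IsRieszSequence {ι : Type*} (f : ι → L2) : Prop :=
  ∃ A B : ℝ, 0 < A ∧ A ≤ B ∧ ∀ c : ι →₀ ℂ,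
    A * ∑ i ∈ c.support, ‖c i‖ ^ 2 ≤ ‖∑ i ∈ c.support, c i • f i‖ ^ 2 ∧
    ‖∑ i ∈ c.support, c i • f i‖ ^ 2 ≤ B * ∑ i ∈ c.support, ‖c i‖ ^ 2

/-- A family is a Riesz basis for the subspace of `L²[0,1)` given by the subset `V`:
it is a Riesz sequence whose closed linear span is `V`. -/
def IsRieszBasis {ι : Type*} (f : ι → L2) (V : Set L2) : Prop :=
  IsRieszSequence f ∧ closure (↑(Submodule.span ℂ (Set.range f)) : Set L2) = V

instance : IsFiniteMeasure μ01 := by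
  rw [μ01]
  infer_instance

section StepFunction

variable {m : ℕ}

def stepFun (h : ℝ) (a : Fin m → ℂ) (x : ℝ) : ℂ :=
  ∑ k : Fin m, (Ico (k * h) ((k + 1) * h)).indicator (fun _ => a k) x

lemma stepFun_eq_zero_of_notMem {h : ℝ} (hh : 0 ≤ h) (a : Fin m → ℂ) {x : ℝ}
    (hx : x ∉ Ico 0 (m * h)) : stepFun h a x = 0 := by
  refine Finset.sum_eq_zero fun k _ => indicator_of_notMem (fun hk => hx ?_) _
  have hkm : (k : ℝ) + 1 ≤ m := by exact_mod_cast k.isLt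
  exact ⟨(by positivity : (0 : ℝ) ≤ k * h).trans hk.1,
    hk.2.trans_le (mul_le_mul_of_nonneg_right hkm hh)⟩

lemma stepFun_eq_of_mem {h : ℝ} (a : Fin m → ℂ) (k : Fin m) {x : ℝ}
    (hx : x ∈ Ico (k * h) ((k + 1) * h)) : stepFun h a x = a k := by
  rw [stepFun, Finset.sum_eq_single k _ (fun hk => absurd (Finset.mem_univ k) hk),
    indicator_of_mem hx]
  intro l _ hlk
  refine indicator_of_notMem (fun hl => hlk (Fin.ext ?_)) _
  have hh : 0 < h := by nlinarith [hx.1, hx.2]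
  have hkl : (k : ℝ) < l + 1 := lt_of_mul_lt_mul_right (hx.1.trans_lt hl.2) hh.le
  have hlk : (l : ℝ) < k + 1 := lt_of_mul_lt_mul_right (hl.1.trans_lt hx.2) hh.le
  norm_cast at hkl hlk
  omega

lemma memLp_stepFun (p : ENNReal) (μ : Measure ℝ) [IsFiniteMeasure μ] (h : ℝ) (a : Fin m → ℂ) :
    MemLp (stepFun h a) p μ :=
  memLp_finsetSum _ fun _ _ =>
    memLp_indicator_const p measurableSet_Ico _ (Or.inr (measure_ne_top _ _))

lemma integral_exp_mul_stepFun {c : ℂ} (hc : c ≠ 0) {h : ℝ} (hh : 0 ≤ h) (a : Fin m → ℂ) :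
    ∫ x : ℝ, cexp (c * x) * stepFun h a x
      = (cexp (c * h) - 1) / c * ∑ k : Fin m, a k * cexp (c * h) ^ (k : ℕ) := by
  have hpiece (k : Fin m) :
      ∫ x, (Ico (k * h) ((k + 1) * h)).indicator (fun x => cexp (c * x) * a k) x
        = (cexp (c * h) - 1) / c * (a k * cexp (c * h) ^ (k : ℕ)) := by
    have hkh : (k : ℝ) * h ≤ (k + 1) * h := by nlinarith
    have hexp (r : ℕ) : cexp (c * ↑((r : ℝ) * h)) = cexp (c * h) ^ r := by
      rw [← Complex.exp_nat_mul]; push_cast; ring_nf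
    have hexp' : cexp (c * ↑(((k : ℕ) + 1 : ℝ) * h)) = cexp (c * h) ^ ((k : ℕ) + 1) := by
      exact_mod_cast hexp (k + 1)
    rw [integral_indicator measurableSet_Ico, integral_Ico_eq_integral_Ioc,
      ← intervalIntegral.integral_of_le hkh, intervalIntegral.integral_mul_const,
      integral_exp_mul_complex hc, hexp', hexp k]
    field_simp
    ring
  have hint (k : Fin m) :
      Integrable ((Ico (k * h) ((k + 1) * h)).indicator (fun x => cexp (c * x) * a k)) :=
    ((by fun_prop : Continuous fun x : ℝ => cexp (c * x) * a k).integrableOn_Icc.mono_set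
      Ico_subset_Icc_self).integrable_indicator measurableSet_Ico
  have hsum : (fun x : ℝ => cexp (c * x) * stepFun h a x) = fun x => ∑ k : Fin m,
      (Ico (k * h) ((k + 1) * h)).indicator (fun x => cexp (c * x) * a k) x := by
    ext x
    simp only [stepFun, Finset.mul_sum, indicator_mul_right]
  rw [hsum, integral_finsetSum _ fun k _ => hint k, Finset.mul_sum]
  exact Finset.sum_congr rfl fun k _ => hpiece k

end StepFunction

section InnerProduct

variable {S : Set ℝ} {f : ℝ → ℂ}

lemma memLp_indicator_exp (hS : MeasurableSet S) (lam : ℝ) :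
    MemLp (S.indicator fun x => cexp (2 * π * lam * x * I)) 2 μ01 := by
  refine MemLp.of_bound ((by fun_prop : Continuous fun x : ℝ => cexp (2 * π * lam * x * I))
    |>.aestronglyMeasurable.indicator hS) 1 (ae_of_all _ fun x => ?_)
  refine (norm_indicator_le_norm_self _ x).trans_eq ?_
  rw [← Complex.norm_exp_ofReal_mul_I (2 * π * lam * x)]
  push_cast
  rfl

lemma inner_expChar_toL2 (hS : MeasurableSet S) (lam : ℝ) (hf : MemLp f 2 μ01) :
    inner ℂ (expChar S lam) (toL2 f) = ∫ x in S, cexp (-2 * π * lam * I * x) * f x ∂μ01 := by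
  have he := memLp_indicator_exp hS lam
  rw [expChar, toL2, toL2, dif_pos he, dif_pos hf, L2.inner_def, ← integral_indicator hS]
  refine integral_congr_ae ?_
  filter_upwards [he.coeFn_toLp, hf.coeFn_toLp] with x hxe hxf
  rw [hxe, hxf, RCLike.inner_apply]
  by_cases hx : x ∈ S
  · rw [indicator_of_mem hx, indicator_of_mem hx, ← Complex.exp_conj, mul_comm]
    congr 2
    simp only [map_mul, Complex.conj_ofReal, Complex.conj_I, map_ofNat]
    ring
  · simp [indicator_of_notMem hx]

lemma inner_expChar_toL2_eq_zero (hS : MeasurableSet S) (lam : ℝ) (hf : MemLp f 2 μ01)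
    (hfS : ∀ x ∈ S, f x = 0) : inner ℂ (expChar S lam) (toL2 f) = 0 := by
  rw [inner_expChar_toL2 hS lam hf]
  exact setIntegral_eq_zero_of_forall_eq_zero fun x hx => by rw [hfS x hx, mul_zero]

lemma inner_expChar_toL2_eq_integral (hS : MeasurableSet S) (hS₁ : S ⊆ Ico 0 1) (lam : ℝ)
    (hf : MemLp f 2 μ01) (hfS : ∀ x ∉ S, f x = 0) :
    inner ℂ (expChar S lam) (toL2 f) = ∫ x : ℝ, cexp (-2 * π * lam * I * x) * f x := by
  rw [inner_expChar_toL2 hS lam hf, μ01, Measure.restrict_restrict hS, inter_eq_left.2 hS₁,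
    setIntegral_eq_integral_of_forall_compl_eq_zero fun x hx => by rw [hfS x hx, mul_zero]]

lemma toL2_ne_zero (hf : MemLp f 2 μ01) {T : Set ℝ} (hT : T ⊆ Ico 0 1) (hT₀ : volume T ≠ 0)
    (hfT : ∀ x ∈ T, f x ≠ 0) : toL2 f ≠ 0 := by
  rw [toL2, dif_pos hf, Ne, Lp.eq_zero_iff_ae_eq_zero]
  intro hf₀
  have hnull : μ01 {x | f x ≠ 0} = 0 := by
    simpa [Filter.EventuallyEq, ae_iff] using hf.coeFn_toLp.symm.trans hf₀
  refine hT₀ ?_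
  rw [← inter_eq_left.2 hT, ← Measure.restrict_apply' measurableSet_Ico]
  exact measure_mono_null hfT hnull

end InnerProduct

lemma cexp_neg_two_pi_mul_I_div_eq_pow {N : ℕ} {n : ℤ} {j : ℕ} (hnj : (N : ℤ) ∣ n + j) :
    cexp (-2 * π * (n : ℝ) * I * ↑(1 / N : ℝ)) = cexp (2 * π * I / N) ^ j := by
  obtain ⟨q, hq⟩ := hnj
  rcases eq_or_ne N 0 with rfl | hN
  · simp
  have hn : (n : ℂ) = N * q - j := by
    rw [eq_sub_iff_add_eq]; exact_mod_cast hq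
  rw [← Complex.exp_nat_mul, ← mul_one (cexp (j * _)),
    ← Complex.exp_int_mul_two_pi_mul_I (-q), ← Complex.exp_add]
  congr 1
  push_cast
  rw [hn]
  field_simp
  ring

def primRoot (N : ℕ) : ℂ := cexp (2 * π * I / N)

def orthWitness (N : ℕ) : ℝ → ℂ :=
  stepFun (1 / N) ![primRoot N ^ 3, -(primRoot N + primRoot N ^ 2), 1]

lemma memLp_orthWitness (N : ℕ) : MemLp (orthWitness N) 2 μ01 :=
  memLp_stepFun _ _ _ _

lemma orthWitness_eq_zero_of_notMem (N : ℕ) {x : ℝ} (hx : x ∉ Ico 0 (3 / N : ℝ)) :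
    orthWitness N x = 0 :=
  stepFun_eq_zero_of_notMem (by positivity) _ (by convert hx using 3; push_cast; ring)

lemma toL2_orthWitness_ne_zero {N : ℕ} (hN : 3 ≤ N) : toL2 (orthWitness N) ≠ 0 := by
  have hN₀ : (0 : ℝ) < N := by positivity
  refine toL2_ne_zero (memLp_orthWitness N) (T := Ico (2 / N : ℝ) (3 / N)) ?_ ?_ fun x hx => ?_
  · refine Ico_subset_Ico (by positivity) ?_
    rw [div_le_one hN₀]; exact_mod_cast hN
  · rw [Real.volume_Ico, ne_eq, ENNReal.ofReal_eq_zero, not_le, ← sub_div]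
    positivity
  · rw [orthWitness, stepFun_eq_of_mem _ 2 ?_]
    · simp
    · convert hx using 2 <;> norm_num <;> ring

lemma integral_exp_mul_orthWitness {N : ℕ} {n : ℤ} {j : ℕ} (hj : j = 1 ∨ j = 2)
    (hnj : (N : ℤ) ∣ n + j) (hn : n ≠ 0) :
    ∫ x : ℝ, cexp (-2 * π * (n : ℝ) * I * x) * orthWitness N x = 0 := by
  have hc : (-2 * π * (n : ℝ) * I : ℂ) ≠ 0 := by simp [pi_ne_zero, hn]
  have hroot : ∑ k : Fin 3, ![primRoot N ^ 3, -(primRoot N + primRoot N ^ 2), 1] k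
      * (primRoot N ^ j) ^ (k : ℕ) = 0 := by
    simp only [Fin.sum_univ_three, Matrix.cons_val_zero, Matrix.cons_val_one, Matrix.cons_val,
      Fin.coe_ofNat_eq_mod]
    rcases hj with rfl | rfl <;> ring
  rw [orthWitness, integral_exp_mul_stepFun hc (by positivity),
    cexp_neg_two_pi_mul_I_div_eq_pow hnj, ← primRoot, hroot, mul_zero]

lemma inner_expChar_orthWitness_eq_zero {N : ℕ} (hN : 3 ≤ N) {a b : ℝ} (ha : 3 / N ≤ a)
    {n : ℤ} {j : ℕ} (hj : j = 1 ∨ j = 2) (hnj : n % N = N - j) :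
    inner ℂ (expChar (Ico 0 1 \ Ico a b) n) (toL2 (orthWitness N)) = 0 := by
  have h₁ : (3 : ℝ) / N ≤ 1 := by
    rw [div_le_one (by positivity)]; exact_mod_cast hN
  rw [inner_expChar_toL2_eq_integral (measurableSet_Ico.diff measurableSet_Ico) sdiff_subset _
    (memLp_orthWitness N) fun x hx => orthWitness_eq_zero_of_notMem N fun hx' =>
      hx ⟨⟨hx'.1, hx'.2.trans_le h₁⟩, fun hab => (hx'.2.trans_le ha).not_ge hab.1⟩]
  refine integral_exp_mul_orthWitness hj ⟨n / N + 1, ?_⟩ ?_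
  · linarith [Int.emod_add_mul_ediv n N]
  · rintro rfl
    rw [Int.zero_emod] at hnj
    omega

/-- Let `N ≥ 5`, `I_1 = [0,(N−2)/N)`, `I_2 = [(N−2)/N,(N−1)/N)`,
`I_3 = [(N−1)/N,1)`, `Λ_1 = ⋃_{k=0}^{N−3}(Nℤ+k)` (i.e. `n % N ≤ N−3`),
`Λ_2 = Nℤ+(N−2)`, `Λ_3 = Nℤ+(N−1)`, and `S_k = [0,1)∖I_k`. Then
`E(S_1,Λ_1) ∪ E(S_2,Λ_2) ∪ E(S_3,Λ_3)` is not complete in `L²[0,1)`: some nonzero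
`f ∈ L²[0,1)` is orthogonal to every member of the system. -/
theorem stmt_14 (N : ℕ) (hN : 5 ≤ N) :
    ∃ f : L2, f ≠ 0 ∧
      (∀ n : ℤ, n % (N : ℤ) ≤ (N : ℤ) - 3 →
        (inner ℂ (expChar (Set.Ico (0 : ℝ) 1 \ Set.Ico (0 : ℝ) (((N : ℝ) - 2) / N))
          ((n : ℤ) : ℝ)) f : ℂ) = 0) ∧
      (∀ n : ℤ, n % (N : ℤ) = (N : ℤ) - 2 →
        (inner ℂ (expChar (Set.Ico (0 : ℝ) 1 \ Set.Ico (((N : ℝ) - 2) / N) (((N : ℝ) - 1) / N))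
          ((n : ℤ) : ℝ)) f : ℂ) = 0) ∧
      (∀ n : ℤ, n % (N : ℤ) = (N : ℤ) - 1 →
        (inner ℂ (expChar (Set.Ico (0 : ℝ) 1 \ Set.Ico (((N : ℝ) - 1) / N) 1)
          ((n : ℤ) : ℝ)) f : ℂ) = 0) := by
  have hN₃ : 3 ≤ N := by omega
  have hN₅ : (5 : ℝ) ≤ N := by exact_mod_cast hN
  have hle : (3 : ℝ) / N ≤ ((N : ℝ) - 2) / N := by gcongr; linarith
  refine ⟨toL2 (orthWitness N), toL2_orthWitness_ne_zero hN₃, fun n _ => ?_,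
    fun n hn => inner_expChar_orthWitness_eq_zero hN₃ hle (Or.inr rfl) (by exact_mod_cast hn),
    fun n hn => inner_expChar_orthWitness_eq_zero hN₃ (hle.trans (by gcongr; linarith))
      (Or.inl rfl) (by exact_mod_cast hn)⟩
  exact inner_expChar_toL2_eq_zero (measurableSet_Ico.diff measurableSet_Ico) _
    (memLp_orthWitness N) fun x hx => orthWitness_eq_zero_of_notMem N fun hx' =>
      hx.2 ⟨hx'.1, hx'.2.trans_le hle⟩
end
end
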